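/- For 1<q<p and t>1, one has H_q(t)·[(p−q)t^p − p t^{p−q}] ≤ (p−q)H_p(t)H_q(t) − p H_p(t), where H_r(t) = r t^{r−1} − (r−1) t^r; equivalently (p−q)t^p − p t^{p−q} ≤ (p−q)H_p(t) − p H_p(t)/H_q(t) whenever H_q(t) > 0. -/

import Mathlib

open Real Set

/-!
Write `H r t = r t^(r-1) - (r-1) t^r`. Clearing `t^(p-q) t^(q-1) = t^(p-1)`, the difference of the two
sides of the inequality factors as `p (p-q) t^(p-1) (t-1) (1 - H q t)`, and `H q t ≤ 1` is Bernoulli's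
inequality `(1/t)^q ≥ 1 + q (1/t - 1)` multiplied by `t^q`.
-/

noncomputable def H (r t : ℝ) : ℝ := r * t ^ (r - 1) - (r - 1) * t ^ r

theorem H_le_one {q t : ℝ} (hq : 1 ≤ q) (ht : 0 < t) : H q t ≤ 1 := by
  have hbern : 1 + q * (t⁻¹ - 1) ≤ (t ^ q)⁻¹ := by
    have := one_add_mul_self_le_rpow_one_add (s := t⁻¹ - 1) (by simp [ht.le]) hq
    rwa [add_sub_cancel, inv_rpow ht.le] at this
  have htq : 0 < t ^ q := rpow_pos_of_pos ht q
  have hmul := mul_le_mul_of_nonneg_left hbern htq.le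
  rw [mul_inv_cancel₀ htq.ne'] at hmul
  have hsub : t ^ (q - 1) = t ^ q * t⁻¹ := by rw [rpow_sub_one ht.ne', div_eq_mul_inv]
  rw [H, hsub]
  linear_combination hmul

theorem H_sub_eq {p q t : ℝ} (ht : 0 < t) :
    (p - q) * H p t * H q t - p * H p t - H q t * ((p - q) * t ^ p - p * t ^ (p - q))
      = p * (p - q) * t ^ (p - 1) * (t - 1) * (1 - H q t) := by
  have hp : t ^ p = t ^ (p - 1) * t := by rw [← rpow_add_one ht.ne', sub_add_cancel]
  have hq : t ^ q = t ^ (q - 1) * t := by rw [← rpow_add_one ht.ne', sub_add_cancel]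
  have hpq : t ^ (p - q) * t ^ (q - 1) = t ^ (p - 1) := by
    rw [← rpow_add ht]; ring_nf
  simp only [H]
  rw [hp, hq]
  linear_combination (p * (q - (q - 1) * t)) * hpq

/-- For `1 < q < p` and `t > 1`:
`H_q(t)·[(p-q)t^p - p t^(p-q)] ≤ (p-q)H_p(t)H_q(t) - p H_p(t)`, and equivalently,
whenever `H_q(t) > 0`, `(p-q)t^p - p t^(p-q) ≤ (p-q)H_p(t) - p H_p(t)/H_q(t)`. -/
theorem Hq_mul_ineq (p q t : ℝ) (hq : 1 < q) (hpq : q < p) (ht : 1 < t) :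
    (q * t ^ (q - 1) - (q - 1) * t ^ q) * ((p - q) * t ^ p - p * t ^ (p - q))
      ≤ (p - q) * (p * t ^ (p - 1) - (p - 1) * t ^ p) * (q * t ^ (q - 1) - (q - 1) * t ^ q)
        - p * (p * t ^ (p - 1) - (p - 1) * t ^ p) ∧
    (0 < q * t ^ (q - 1) - (q - 1) * t ^ q →
      (p - q) * t ^ p - p * t ^ (p - q)
        ≤ (p - q) * (p * t ^ (p - 1) - (p - 1) * t ^ p)
          - p * (p * t ^ (p - 1) - (p - 1) * t ^ p) / (q * t ^ (q - 1) - (q - 1) * t ^ q)) := by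
  have ht0 : 0 < t := by linarith
  have hdiff : 0 ≤ p * (p - q) * t ^ (p - 1) * (t - 1) * (1 - H q t) := by
    have := H_le_one hq.le ht0
    have := rpow_nonneg ht0.le (p - 1)
    apply_rules [mul_nonneg] <;> linarith
  have hmul : H q t * ((p - q) * t ^ p - p * t ^ (p - q)) ≤ (p - q) * H p t * H q t - p * H p t := by
    linarith [H_sub_eq (p := p) (q := q) ht0]
  refine ⟨hmul, fun (hHq : 0 < H q t) => ?_⟩
  change _ ≤ (p - q) * H p t - p * H p t / H q t
  rw [le_sub_comm, div_le_iff₀ hHq]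
  linear_combination hmul
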